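/- arXiv:1008.4371 — 2 statements merged into one kernel-verified Lean document; each statement's English description precedes it below -/
import Mathlib

section
/- Let X1, X2, X3 be Banach spaces with continuous imbeddings X1 ⊆ X2 ⊆ X3, and let 𝒟 be a group of linear operators g : X3 → X3 such that for each j = 1, 2, 3, every g ∈ 𝒟 maps X_j into X_j and acts isometrically on X_j. If at least one of the imbeddings X1 ⊆ X2 and X2 ⊆ X3 is 𝒟-cocompact, then the imbedding X1 ⊆ X3 is 𝒟-cocompact. -/
/-! A norm-convergent sequence stays norm-convergent under a continuous imbedding, which settles
the case of a cocompact `X1 ⊆ X2`. If `X2 ⊆ X3` is cocompact, note that `X1 ⊆ X2` commutes with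
the action of `D` and, being continuous, preserves weak convergence to `0`; so it carries
`D`-weakly convergent sequences of `X1` to `D`-weakly convergent sequences of `X2`. -/

open Filter

/-- A sequence in a normed space converges weakly to `0`. -/
def WeakNull {X : Type*} [NormedAddCommGroup X] [NormedSpace ℝ X] (v : ℕ → X) : Prop :=
  ∀ f : StrongDual ℝ X, Tendsto (fun k => f (v k)) atTop (nhds 0)

open Topology

section Cocompactness

variable {G X Y Z : Type*}
  [NormedAddCommGroup X] [NormedSpace ℝ X]
  [NormedAddCommGroup Y] [NormedSpace ℝ Y]
  [NormedAddCommGroup Z] [NormedSpace ℝ Z]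

theorem WeakNull.map {v : ℕ → X} (hv : WeakNull v) (A : X →L[ℝ] Y) :
    WeakNull fun k => A (v k) :=
  fun f => hv (f.comp A)

def DWeakTendsto (T : G → X →ₗ[ℝ] X) (u : ℕ → X) (l : X) : Prop :=
  ∀ g : ℕ → G, WeakNull fun k => T (g k) (u k - l)

def IsCocompactEmbedding (T : G → X →ₗ[ℝ] X) (i : X →L[ℝ] Y) : Prop :=
  ∀ u : ℕ → X, ∀ l : X, DWeakTendsto T u l →
    Tendsto (fun k => ‖i (u k) - i l‖) atTop (𝓝 0)

theorem IsCocompactEmbedding.comp_left {T : G → X →ₗ[ℝ] X} {i : X →L[ℝ] Y}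
    (hi : IsCocompactEmbedding T i) (j : Y →L[ℝ] Z) :
    IsCocompactEmbedding T (j.comp i) := by
  intro u l hu
  have hiu : Tendsto (fun k => i (u k)) atTop (𝓝 (i l)) :=
    tendsto_iff_norm_sub_tendsto_zero.2 (hi u l hu)
  exact tendsto_iff_norm_sub_tendsto_zero.1 ((j.continuous.tendsto _).comp hiu)

theorem IsCocompactEmbedding.comp_right {T : G → X →ₗ[ℝ] X} {S : G → Y →ₗ[ℝ] Y}
    {j : Y →L[ℝ] Z} (hj : IsCocompactEmbedding S j) (i : X →L[ℝ] Y)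
    (hi : ∀ g x, i (T g x) = S g (i x)) :
    IsCocompactEmbedding T (j.comp i) := by
  intro u l hu
  refine hj (fun k => i (u k)) (i l) fun g => ?_
  simpa only [hi, map_sub] using (hu g).map i

end Cocompactness

theorem stmt0_general (X1 X2 X3 : Type*)
    [NormedAddCommGroup X1] [NormedSpace ℝ X1]
    [NormedAddCommGroup X2] [NormedSpace ℝ X2]
    [NormedAddCommGroup X3] [NormedSpace ℝ X3]
    (i12 : X1 →L[ℝ] X2) (i23 : X2 →L[ℝ] X3)
    (D : Subgroup (X3 ≃ₗ[ℝ] X3))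
    -- the induced actions of `D` on `X1` and on `X2`:
    (T1 : D → X1 →ₗ[ℝ] X1) (T2 : D → X2 →ₗ[ℝ] X2)
    (hT1 : ∀ g : D, ∀ x : X1, i12 (T1 g x) = T2 g (i12 x))
    -- at least one of the two imbeddings `X1 ⊆ X2`, `X2 ⊆ X3` is `D`-cocompact:
    (hcc :
      (∀ u : ℕ → X1, ∀ l : X1,
          (∀ g : ℕ → D, WeakNull fun k => T1 (g k) (u k - l)) →
          Tendsto (fun k => ‖i12 (u k) - i12 l‖) atTop (nhds 0)) ∨
      (∀ u : ℕ → X2, ∀ l : X2,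
          (∀ g : ℕ → D, WeakNull fun k => T2 (g k) (u k - l)) →
          Tendsto (fun k => ‖i23 (u k) - i23 l‖) atTop (nhds 0))) :
    -- conclusion: the imbedding `X1 ⊆ X3` is `D`-cocompact
    ∀ u : ℕ → X1, ∀ l : X1,
      (∀ g : ℕ → D, WeakNull fun k => T1 (g k) (u k - l)) →
      Tendsto (fun k => ‖i23 (i12 (u k)) - i23 (i12 l)‖) atTop (nhds 0) := by
  have h13 : IsCocompactEmbedding T1 (i23.comp i12) := by
    rcases hcc with h12 | h23
    · exact IsCocompactEmbedding.comp_left h12 i23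
    · exact IsCocompactEmbedding.comp_right h23 i12 hT1
  exact h13

/-- Let `X1 ⊆ X2 ⊆ X3` be Banach spaces (the inclusions being realized by
injective continuous linear maps `i12`, `i23`), and let `D` be a group of linear bijections
of `X3` which map each `Xj` into itself and act isometrically on each `Xj` (the induced
actions on `X1`, `X2` being `T1`, `T2`).  If at least one of the imbeddings `X1 ⊆ X2`,
`X2 ⊆ X3` is `D`-cocompact, then the imbedding `X1 ⊆ X3` is `D`-cocompact. -/
theorem stmt0 (X1 X2 X3 : Type*)
    [NormedAddCommGroup X1] [NormedSpace ℝ X1] [CompleteSpace X1]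
    [NormedAddCommGroup X2] [NormedSpace ℝ X2] [CompleteSpace X2]
    [NormedAddCommGroup X3] [NormedSpace ℝ X3] [CompleteSpace X3]
    (i12 : X1 →L[ℝ] X2) (i23 : X2 →L[ℝ] X3)
    (h12 : Function.Injective i12) (h23 : Function.Injective i23)
    (D : Subgroup (X3 ≃ₗ[ℝ] X3))
    -- the induced actions of `D` on `X1` and on `X2`:
    (T1 : D → X1 →ₗ[ℝ] X1) (T2 : D → X2 →ₗ[ℝ] X2)
    (hT1 : ∀ g : D, ∀ x : X1, i12 (T1 g x) = T2 g (i12 x))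
    (hT2 : ∀ g : D, ∀ x : X2, i23 (T2 g x) = (g : X3 ≃ₗ[ℝ] X3) (i23 x))
    -- each `g ∈ D` maps `Xj` *onto* `Xj`:
    (hT1surj : ∀ g : D, Function.Surjective (T1 g))
    (hT2surj : ∀ g : D, Function.Surjective (T2 g))
    -- each `g ∈ D` acts isometrically on `X1`, `X2` and `X3`:
    (hiso1 : ∀ g : D, ∀ x : X1, ‖T1 g x‖ = ‖x‖)
    (hiso2 : ∀ g : D, ∀ x : X2, ‖T2 g x‖ = ‖x‖)
    (hiso3 : ∀ g : D, ∀ x : X3, ‖(g : X3 ≃ₗ[ℝ] X3) x‖ = ‖x‖)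
    -- at least one of the two imbeddings `X1 ⊆ X2`, `X2 ⊆ X3` is `D`-cocompact:
    (hcc :
      (∀ u : ℕ → X1, ∀ l : X1,
          (∀ g : ℕ → D, WeakNull fun k => T1 (g k) (u k - l)) →
          Tendsto (fun k => ‖i12 (u k) - i12 l‖) atTop (nhds 0)) ∨
      (∀ u : ℕ → X2, ∀ l : X2,
          (∀ g : ℕ → D, WeakNull fun k => T2 (g k) (u k - l)) →
          Tendsto (fun k => ‖i23 (u k) - i23 l‖) atTop (nhds 0))) :
    -- conclusion: the imbedding `X1 ⊆ X3` is `D`-cocompact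
    ∀ u : ℕ → X1, ∀ l : X1,
      (∀ g : ℕ → D, WeakNull fun k => T1 (g k) (u k - l)) →
      Tendsto (fun k => ‖i23 (i12 (u k)) - i23 (i12 l)‖) atTop (nhds 0) :=
  stmt0_general X1 X2 X3 i12 i23 D T1 T2 hT1 hcc
end

section
/- Suppose 1 ≤ p < ∞. For each k, n ∈ ℕ let y_k^{(n)} ∈ ℝ^N, and assume that for all m ≠ n, |y_k^{(m)} − y_k^{(n)}| → +∞ as k → ∞. Let (u_k) be a bounded sequence in L^p(ℝ^N) such that, for each n ∈ ℕ, the sequence u_k(· + y_k^{(n)}) converges weakly in L^p(ℝ^N) and almost everywhere to a function w^{(n)}. Then for every M ∈ ℕ, ∫_{ℝ^N} |u_k|^p dx − ∑_{n=1}^{M} ∫_{ℝ^N} |w^{(n)}|^p dx − ∫_{ℝ^N} |u_k − ∑_{n=1}^{M} w^{(n)}(· − y_k^{(n)})|^p dx → 0 as k → ∞. -/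
/-!
Induction on `M`. Translated by `y M k`, the remainder `u_k - ∑_{n<M} w n (· - y n k)` becomes
`u_k(· + y M k) - ∑_{n<M} w n (· + y M k - y n k)`. Its first term converges a.e. to `w M`; the
others are translates of fixed `L^p` functions by vectors escaping to infinity, so their `L^p`
mass on every ball tends to zero and, along a subsequence of any subsequence, they vanish a.e.
The Brezis–Lieb lemma, applied along these subsequences, then splits `∫ |w M|^p` off the
remainder.
-/

open MeasureTheory Filter ENNReal Metric Topology

lemma exists_abs_rpow_add_sub_rpow_sub_rpow_le {p : ℝ} (hp : 0 < p) {ε : ℝ} (hε : 0 < ε) :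
    ∃ C : ℝ, ∀ a b : ℝ, |(|a + b| ^ p - |a| ^ p - |b| ^ p)| ≤ ε * |a| ^ p + C * |b| ^ p := by
  have hcont : ContinuousAt (fun t : ℝ => |1 + t| ^ p) 0 :=
    ((continuous_const.add continuous_id).abs.rpow_const fun _ => Or.inr hp.le).continuousAt
  obtain ⟨δ, hδ, hδε⟩ := Metric.continuousAt_iff.1 hcont ε hε
  refine ⟨(1 + δ⁻¹) ^ p + δ⁻¹ ^ p + 1, fun a b => ?_⟩
  have hap : 0 ≤ |a| ^ p := by positivity
  have hbp : 0 ≤ |b| ^ p := by positivity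
  have hC : 0 ≤ (1 + δ⁻¹) ^ p + δ⁻¹ ^ p := by positivity
  -- either `b` is a small perturbation of `a`, handled by scaling to continuity at `t = 0`,
  -- or `|a| ≤ δ⁻¹ * |b|` and everything is dominated by `|b| ^ p`
  rcases lt_or_ge |b| (δ * |a|) with hsmall | hlarge
  · have ha : a ≠ 0 := by
      rintro rfl
      simp only [abs_zero, mul_zero] at hsmall
      exact (abs_nonneg b).not_gt hsmall
    have hfac : |a + b| ^ p = |a| ^ p * |1 + b / a| ^ p := by
      rw [← Real.mul_rpow (abs_nonneg _) (abs_nonneg _), ← abs_mul, mul_add, mul_one,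
        mul_div_cancel₀ _ ha]
    have hclose : |(|1 + b / a| ^ p - 1)| < ε := by
      have := @hδε (b / a) (by
        rw [dist_zero_right, Real.norm_eq_abs, abs_div]
        exact (div_lt_iff₀ (abs_pos.2 ha)).2 (by linarith))
      simpa [Real.dist_eq] using this
    calc |(|a + b| ^ p - |a| ^ p - |b| ^ p)|
        ≤ |(|a + b| ^ p - |a| ^ p)| + |b| ^ p := by
          simpa [abs_of_nonneg hbp] using abs_sub (|a + b| ^ p - |a| ^ p) (|b| ^ p)
      _ = |a| ^ p * |(|1 + b / a| ^ p - 1)| + |b| ^ p := by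
          rw [hfac, ← mul_sub_one, abs_mul, abs_of_nonneg hap]
      _ ≤ ε * |a| ^ p + ((1 + δ⁻¹) ^ p + δ⁻¹ ^ p + 1) * |b| ^ p := by
          nlinarith [mul_le_mul_of_nonneg_left hclose.le hap]
  · have ha : |a| ≤ δ⁻¹ * |b| := by
      rw [le_inv_mul_iff₀ hδ]; linarith
    have h1 : |a + b| ^ p ≤ (1 + δ⁻¹) ^ p * |b| ^ p := by
      rw [← Real.mul_rpow (by positivity) (abs_nonneg _)]
      gcongr
      linarith [abs_add_le a b]
    have h2 : |a| ^ p ≤ δ⁻¹ ^ p * |b| ^ p := by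
      rw [← Real.mul_rpow (by positivity) (abs_nonneg _)]
      gcongr
    have habp : 0 ≤ |a + b| ^ p := by positivity
    rw [abs_le]
    constructor <;> nlinarith

section BrezisLieb

variable {α : Type*} [MeasurableSpace α] {μ : Measure α}

lemma MeasureTheory.MemLp.integrable_abs_rpow {p : ℝ} (hp : 0 < p) {f : α → ℝ}
    (hf : MemLp f (ENNReal.ofReal p) μ) : Integrable (fun x => |f x| ^ p) μ := by
  simpa [Real.norm_eq_abs, hp.le] using
    hf.integrable_norm_rpow (by simpa using hp) ENNReal.ofReal_ne_top

theorem tendsto_integral_zero_of_abs_le_mul_add {G F : ℕ → α → ℝ} {B : ℝ}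
    (hG : ∀ k, Integrable (G k) μ) (hF : ∀ k, Integrable (F k) μ)
    (hF_nonneg : ∀ k x, 0 ≤ F k x) (hF_le : ∀ k, ∫ x, F k x ∂μ ≤ B)
    (hlim : ∀ᵐ x ∂μ, Tendsto (fun k => G k x) atTop (𝓝 0))
    (hdom : ∀ η > 0, ∃ H : α → ℝ, Integrable H μ ∧ ∀ k x, |G k x| ≤ η * F k x + H x) :
    Tendsto (fun k => ∫ x, G k x ∂μ) atTop (𝓝 0) := by
  rw [NormedAddGroup.tendsto_nhds_zero]
  intro ε hε
  set η := ε / (2 * (|B| + 1))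
  obtain ⟨H, hH, hGH⟩ := hdom η (by positivity)
  -- the part of `|G k|` not absorbed by `η * F k` is dominated by `|H|` and tends to zero
  set h : ℕ → α → ℝ := fun k x => max (|G k x| - η * F k x) 0
  have hh : ∀ k, Integrable (h k) μ := fun k => ((hG k).abs.sub ((hF k).const_mul η)).pos_part
  have hh_lim : Tendsto (fun k => ∫ x, h k x ∂μ) atTop (𝓝 0) := by
    refine integral_zero (α := α) ℝ ▸ tendsto_integral_of_dominated_convergence (fun x => |H x|)
      (fun k => (hh k).aestronglyMeasurable) hH.abs (fun k => ae_of_all _ fun x => ?_) ?_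
    · rw [Real.norm_eq_abs, abs_of_nonneg (le_max_right _ _)]
      exact max_le (by linarith [hGH k x, le_abs_self (H x)]) (abs_nonneg _)
    · filter_upwards [hlim] with x hx
      refine tendsto_of_tendsto_of_tendsto_of_le_of_le tendsto_const_nhds
        (by simpa using hx.abs) (fun k => le_max_right _ _) fun k => ?_
      exact max_le (by nlinarith [hF_nonneg k x, (by positivity : 0 < η)]) (abs_nonneg _)
  filter_upwards [hh_lim.eventually_lt_const (half_pos hε)] with k hk
  have hηB : η * ∫ x, F k x ∂μ ≤ ε / 2 := by
    calc η * ∫ x, F k x ∂μ ≤ η * (|B| + 1) := by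
          gcongr; linarith [hF_le k, le_abs_self B]
      _ = ε / 2 := by simp only [η]; field_simp
  calc ‖∫ x, G k x ∂μ‖ ≤ ∫ x, |G k x| ∂μ := norm_integral_le_integral_norm _
    _ ≤ ∫ x, (h k x + η * F k x) ∂μ :=
        integral_mono (hG k).abs ((hh k).add ((hF k).const_mul η)) fun x => by
          linarith [le_max_left (|G k x| - η * F k x) 0]
    _ = (∫ x, h k x ∂μ) + η * ∫ x, F k x ∂μ := by
        rw [integral_add (hh k) ((hF k).const_mul η), integral_const_mul]
    _ < ε := by linarith

lemma integral_abs_rpow_le_of_eLpNorm_le {p : ℝ} (hp : 0 < p) {f : α → ℝ}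
    (hf : MemLp f (ENNReal.ofReal p) μ) {C : ℝ≥0∞} (hC : C ≠ ∞)
    (h : eLpNorm f (ENNReal.ofReal p) μ ≤ C) : ∫ x, |f x| ^ p ∂μ ≤ C.toReal ^ p := by
  rw [hf.eLpNorm_eq_integral_rpow_norm (by simpa using hp) ofReal_ne_top,
    ENNReal.ofReal_le_iff_le_toReal hC, ENNReal.toReal_ofReal hp.le,
    Real.rpow_inv_le_iff_of_pos (integral_nonneg fun _ => by positivity) toReal_nonneg hp] at h
  simpa only [Real.norm_eq_abs] using h

lemma memLp_of_ae_tendsto {q : ℝ≥0∞} {f : ℕ → α → ℝ} {g : α → ℝ}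
    (hf : ∀ k, AEStronglyMeasurable (f k) μ) {C : ℝ≥0∞} (hC : C ≠ ∞)
    (hbdd : ∀ k, eLpNorm (f k) q μ ≤ C)
    (hae : ∀ᵐ x ∂μ, Tendsto (fun k => f k x) atTop (𝓝 (g x))) : MemLp g q μ :=
  ⟨aestronglyMeasurable_of_tendsto_ae atTop hf hae,
    (Lp.eLpNorm_le_of_ae_tendsto (Eventually.of_forall hbdd) hf hae).trans_lt hC.lt_top⟩

/-- The Brezis–Lieb lemma. -/
theorem tendsto_integral_abs_rpow_sub_integral_abs_rpow_sub {p : ℝ} (hp : 0 < p)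
    {f : ℕ → α → ℝ} {g : α → ℝ} (hf : ∀ k, AEStronglyMeasurable (f k) μ) {C : ℝ≥0∞}
    (hC : C ≠ ∞) (hbdd : ∀ k, eLpNorm (f k) (ENNReal.ofReal p) μ ≤ C)
    (hae : ∀ᵐ x ∂μ, Tendsto (fun k => f k x) atTop (𝓝 (g x))) :
    Tendsto (fun k => (∫ x, |f k x| ^ p ∂μ) - ∫ x, |f k x - g x| ^ p ∂μ)
      atTop (𝓝 (∫ x, |g x| ^ p ∂μ)) := by
  have hf' : ∀ k, MemLp (f k) (ENNReal.ofReal p) μ :=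
    fun k => ⟨hf k, (hbdd k).trans_lt hC.lt_top⟩
  have hg : MemLp g (ENNReal.ofReal p) μ := memLp_of_ae_tendsto hf hC hbdd hae
  have hfp := fun k => (hf' k).integrable_abs_rpow hp
  have hfgp : ∀ k, Integrable (fun x => |f k x - g x| ^ p) μ :=
    fun k => ((hf' k).sub hg).integrable_abs_rpow hp
  have hgp := hg.integrable_abs_rpow hp
  have hg_le : eLpNorm g (ENNReal.ofReal p) μ ≤ C :=
    Lp.eLpNorm_le_of_ae_tendsto (Eventually.of_forall hbdd) hf hae
  have hfg_le : ∀ k, ∫ x, |f k x - g x| ^ p ∂μ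
      ≤ (LpAddConst (ENNReal.ofReal p) * (C + C)).toReal ^ p := fun k =>
    integral_abs_rpow_le_of_eLpNorm_le hp ((hf' k).sub hg)
      (ENNReal.mul_ne_top (LpAddConst_lt_top _).ne (ENNReal.add_ne_top.2 ⟨hC, hC⟩))
      ((eLpNorm_sub_le' (hf k) hg.1 _).trans (by gcongr; exact hbdd k))
  have key := tendsto_integral_zero_of_abs_le_mul_add (μ := μ)
    (G := fun k x => |f k x| ^ p - |f k x - g x| ^ p - |g x| ^ p)
    (fun k => ((hfp k).sub (hfgp k)).sub hgp) hfgp (fun k x => by positivity) hfg_le ?_ ?_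
  · rw [← tendsto_sub_nhds_zero_iff]
    refine key.congr fun k => ?_
    rw [integral_sub ?_ hgp, integral_sub (hfp k) (hfgp k)]
    exact (hfp k).sub (hfgp k)
  · filter_upwards [hae] with x hx
    have hcont : Continuous fun t : ℝ => |t| ^ p :=
      continuous_abs.rpow_const fun _ => Or.inr hp.le
    have := ((hcont.tendsto _).comp hx).sub ((hcont.tendsto _).comp (hx.sub_const (g x)))
    simpa [Function.comp_def, Real.zero_rpow hp.ne'] using this.sub_const (|g x| ^ p)
  · intro η hη
    obtain ⟨C, hC⟩ := exists_abs_rpow_add_sub_rpow_sub_rpow_le hp hη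
    refine ⟨fun x => C * |g x| ^ p, hgp.const_mul C, fun k x => ?_⟩
    simpa using hC (f k x - g x) (g x)

end BrezisLieb

section Translates

variable {E : Type*} [NormedAddCommGroup E] [MeasurableSpace E] [BorelSpace E] {μ : Measure E}

theorem tendsto_setLIntegral_ball_comp_add_of_tendsto_norm [μ.IsAddRightInvariant]
    {F : E → ℝ≥0∞} (hF : AEMeasurable F μ) (hF_fin : ∫⁻ x, F x ∂μ ≠ ∞) {z : ℕ → E}
    (hz : Tendsto (fun k => ‖z k‖) atTop atTop) (R : ℝ) :
    Tendsto (fun k => ∫⁻ x in ball 0 R, F (x + z k) ∂μ) atTop (𝓝 0) := by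
  have htrans : ∀ k, ∫⁻ x in ball 0 R, F (x + z k) ∂μ
      = ∫⁻ y, (ball (z k) R).indicator F y ∂μ := by
    intro k
    rw [← lintegral_indicator measurableSet_ball,
      ← (measurePreserving_add_right μ (z k)).lintegral_comp_emb
        (measurableEmbedding_addRight (z k)) ((ball (z k) R).indicator F)]
    congr 1
    ext x
    classical
    simp [Set.indicator_apply, dist_eq_norm]
  simp_rw [htrans]
  refine lintegral_zero (μ := μ) ▸ tendsto_lintegral_of_dominated_convergence' F
    (fun k => hF.indicator measurableSet_ball) (fun k => ae_of_all _ (Set.indicator_le_self _ _))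
    hF_fin (ae_of_all _ fun y => tendsto_const_nhds.congr' ?_)
  filter_upwards [hz.eventually_ge_atTop (R + ‖y‖)] with k hk
  refine (Set.indicator_of_notMem (fun hy => ?_) F).symm
  rw [mem_ball, dist_eq_norm] at hy
  linarith [norm_sub_norm_le (z k) y, norm_sub_rev (z k) y]

theorem exists_strictMono_ae_tendsto_zero_of_tendsto_setLIntegral_ball
    {h : ℕ → E → ℝ≥0∞} (hh : ∀ k, AEMeasurable (h k) μ)
    (hlim : ∀ R, Tendsto (fun k => ∫⁻ x in ball 0 R, h k x ∂μ) atTop (𝓝 0)) :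
    ∃ φ : ℕ → ℕ, StrictMono φ ∧ ∀ᵐ x ∂μ, Tendsto (fun j => h (φ j) x) atTop (𝓝 0) := by
  obtain ⟨φ, hφ, hsmall⟩ := extraction_forall_of_eventually fun j : ℕ =>
    ((hlim j).eventually_lt_const (ENNReal.pow_pos (by norm_num : (0 : ℝ≥0∞) < 2⁻¹) j)).mono
      fun _ hk => hk.le
  refine ⟨φ, hφ, ?_⟩
  -- Borel–Cantelli: the restrictions of `h (φ j)` to `ball 0 j` have summable integrals
  set A : ℕ → E → ℝ≥0∞ := fun j => (ball 0 (j : ℝ)).indicator (h (φ j))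
  have hA : ∀ j, AEMeasurable (A j) μ := fun j => (hh (φ j)).indicator measurableSet_ball
  have hA_sum : ∫⁻ x, ∑' j, A j x ∂μ ≠ ∞ := by
    rw [lintegral_tsum hA]
    refine ne_top_of_le_ne_top (b := ∑' j : ℕ, (2⁻¹ : ℝ≥0∞) ^ j) ?_
      (ENNReal.tsum_le_tsum fun j => ?_)
    · rw [ENNReal.tsum_geometric, ENNReal.one_sub_inv_two, inv_inv]
      exact ENNReal.ofNat_ne_top
    · rw [lintegral_indicator measurableSet_ball]
      exact hsmall j
  filter_upwards [ae_lt_top' (AEMeasurable.tsum hA) hA_sum] with x hx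
  refine (ENNReal.tendsto_atTop_zero_of_tsum_ne_top hx.ne).congr' ?_
  filter_upwards [eventually_gt_atTop ⌈‖x‖⌉₊] with j hj
  refine Set.indicator_of_mem ?_ _
  rw [mem_ball_zero_iff]
  exact (Nat.le_ceil _).trans_lt (by exact_mod_cast hj)

theorem exists_strictMono_ae_tendsto_sum_comp_add_zero [μ.IsAddRightInvariant]
    {p : ℝ} (hp : 0 < p) {ι : Type*} (s : Finset ι) {g : ι → E → ℝ}
    (hg : ∀ i ∈ s, MemLp (g i) (ENNReal.ofReal p) μ) {z : ι → ℕ → E}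
    (hz : ∀ i ∈ s, Tendsto (fun k => ‖z i k‖) atTop atTop) :
    ∃ φ : ℕ → ℕ, StrictMono φ ∧
      ∀ᵐ x ∂μ, Tendsto (fun j => ∑ i ∈ s, g i (x + z i (φ j))) atTop (𝓝 0) := by
  have hmeas : ∀ i ∈ s, AEMeasurable (fun x => ‖g i x‖ₑ ^ p) μ := fun i hi =>
    (hg i hi).aestronglyMeasurable.enorm.pow_const p
  have hmeas_add :
      ∀ i ∈ s, ∀ c : E, AEMeasurable (fun x => ‖g i (x + c)‖ₑ ^ p) μ :=
    fun i hi c => (hmeas i hi).comp_quasiMeasurePreserving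
      (measurePreserving_add_right μ c).quasiMeasurePreserving
  obtain ⟨φ, hφ, hae⟩ := exists_strictMono_ae_tendsto_zero_of_tendsto_setLIntegral_ball
    (μ := μ) (h := fun k x => ∑ i ∈ s, ‖g i (x + z i k)‖ₑ ^ p)
    (fun k => Finset.aemeasurable_fun_sum _ fun i hi => hmeas_add i hi (z i k)) fun R => by
      simp_rw [lintegral_finsetSum' _ fun i hi => (hmeas_add i hi _).restrict]
      simpa using tendsto_finsetSum s fun i hi =>
        tendsto_setLIntegral_ball_comp_add_of_tendsto_norm (hmeas i hi)
          (by simpa [hp.le] using (lintegral_rpow_enorm_lt_top_of_eLpNorm_lt_top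
            (by simpa using hp) ofReal_ne_top (hg i hi).2).ne) (hz i hi) R
  refine ⟨φ, hφ, ?_⟩
  filter_upwards [hae] with x hx
  have hterm : ∀ i ∈ s, Tendsto (fun j => g i (x + z i (φ j))) atTop (𝓝 0) := fun i hi => by
    have hi_le : Tendsto (fun j => ‖g i (x + z i (φ j))‖ₑ ^ p) atTop (𝓝 0) :=
      tendsto_of_tendsto_of_tendsto_of_le_of_le tendsto_const_nhds hx (fun _ => zero_le)
        fun j => Finset.single_le_sum (f := fun i => ‖g i (x + z i (φ j))‖ₑ ^ p)
          (fun _ _ => zero_le) hi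
    have := (ENNReal.continuous_rpow_const (y := p⁻¹)).tendsto 0 |>.comp hi_le
    simp only [Function.comp_def, ← ENNReal.rpow_mul, mul_inv_cancel₀ hp.ne', ENNReal.rpow_one,
      ENNReal.zero_rpow_of_pos (inv_pos.2 hp)] at this
    exact tendsto_zero_iff_enorm_tendsto_zero.2 this
  simpa using tendsto_finsetSum s hterm

end Translates

section IteratedBrezisLieb

variable {E : Type*} [NormedAddCommGroup E] [MeasurableSpace E] [BorelSpace E] {μ : Measure E}
  [μ.IsAddRightInvariant]

lemma aestronglyMeasurable_sub_sum_comp_add {f : E → ℝ} {ι : Type*} {s : Finset ι}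
    {g : ι → E → ℝ} (hf : AEStronglyMeasurable f μ)
    (hg : ∀ i ∈ s, AEStronglyMeasurable (g i) μ) (c : ι → E) :
    AEStronglyMeasurable (fun x => f x - ∑ i ∈ s, g i (x + c i)) μ :=
  hf.sub <| Finset.aestronglyMeasurable_fun_sum s fun i hi =>
    (hg i hi).comp_quasiMeasurePreserving
      (measurePreserving_add_right μ (c i)).quasiMeasurePreserving

lemma eLpNorm_sub_sum_comp_add_le {q : ℝ≥0∞} (hq : 1 ≤ q) {f : E → ℝ} {ι : Type*}
    {s : Finset ι} {g : ι → E → ℝ} (hf : AEStronglyMeasurable f μ)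
    (hg : ∀ i ∈ s, AEStronglyMeasurable (g i) μ) (c : ι → E) :
    eLpNorm (fun x => f x - ∑ i ∈ s, g i (x + c i)) q μ
      ≤ eLpNorm f q μ + ∑ i ∈ s, eLpNorm (g i) q μ := by
  have hgc : ∀ i ∈ s, AEStronglyMeasurable (fun x => g i (x + c i)) μ := fun i hi =>
    (hg i hi).comp_quasiMeasurePreserving
      (measurePreserving_add_right μ (c i)).quasiMeasurePreserving
  calc eLpNorm (fun x => f x - ∑ i ∈ s, g i (x + c i)) q μ
      ≤ eLpNorm f q μ + eLpNorm (fun x => ∑ i ∈ s, g i (x + c i)) q μ :=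
        eLpNorm_sub_le hf (Finset.aestronglyMeasurable_fun_sum s hgc) hq
    _ ≤ eLpNorm f q μ + ∑ i ∈ s, eLpNorm (fun x => g i (x + c i)) q μ := by
        gcongr
        simpa only [Finset.sum_fn] using eLpNorm_sum_le hgc hq
    _ = eLpNorm f q μ + ∑ i ∈ s, eLpNorm (g i) q μ := by
        congr 1
        refine Finset.sum_congr rfl fun i hi => ?_
        exact eLpNorm_comp_measurePreserving (hg i hi) (measurePreserving_add_right μ (c i))

variable {p : ℝ} {y : ℕ → ℕ → E} {u w : ℕ → E → ℝ}

theorem tendsto_integral_abs_rpow_sub_sum_sub_succ (hp : 1 ≤ p)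
    (hy : ∀ m n, m ≠ n → Tendsto (fun k => ‖y m k - y n k‖) atTop atTop)
    (hu : ∀ k, AEStronglyMeasurable (u k) μ) {C : ℝ≥0∞} (hC : C ≠ ∞)
    (hbdd : ∀ k, eLpNorm (u k) (ENNReal.ofReal p) μ ≤ C)
    (hw : ∀ n, MemLp (w n) (ENNReal.ofReal p) μ)
    (hae : ∀ n, ∀ᵐ x ∂μ, Tendsto (fun k => u k (x + y n k)) atTop (𝓝 (w n x))) (M : ℕ) :
    Tendsto (fun k => (∫ x, |u k x - ∑ n ∈ Finset.range M, w n (x - y n k)| ^ p ∂μ)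
        - ∫ x, |u k x - ∑ n ∈ Finset.range (M + 1), w n (x - y n k)| ^ p ∂μ)
      atTop (𝓝 (∫ x, |w M x| ^ p ∂μ)) := by
  have hp0 : 0 < p := zero_lt_one.trans_le hp
  set v : ℕ → E → ℝ := fun k x =>
    u k (x + y M k) - ∑ n ∈ Finset.range M, w n (x + (y M k - y n k))
  have hu_add : ∀ k, AEStronglyMeasurable (fun x => u k (x + y M k)) μ := fun k =>
    (hu k).comp_quasiMeasurePreserving
      (measurePreserving_add_right μ (y M k)).quasiMeasurePreserving
  have hv_meas : ∀ k, AEStronglyMeasurable (v k) μ := fun k =>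
    aestronglyMeasurable_sub_sum_comp_add (hu_add k) (fun n _ => (hw n).aestronglyMeasurable) _
  have hv_bdd : ∀ k, eLpNorm (v k) (ENNReal.ofReal p) μ
      ≤ C + ∑ n ∈ Finset.range M, eLpNorm (w n) (ENNReal.ofReal p) μ := fun k => by
    refine (eLpNorm_sub_sum_comp_add_le (by simpa using hp) (hu_add k)
      (fun n _ => (hw n).aestronglyMeasurable) _).trans ?_
    gcongr
    exact (eLpNorm_comp_measurePreserving (hu k) (measurePreserving_add_right μ (y M k))).trans_le
      (hbdd k)
  have hshift : ∀ k m, ∫ x, |u k x - ∑ n ∈ Finset.range m, w n (x - y n k)| ^ p ∂μ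
      = ∫ x, |u k (x + y M k) - ∑ n ∈ Finset.range m, w n (x + (y M k - y n k))| ^ p ∂μ :=
    fun k m => by
      simp only [← add_sub_assoc]
      exact (integral_add_right_eq_self
        (fun x => |u k x - ∑ n ∈ Finset.range m, w n (x - y n k)| ^ p) (y M k)).symm
  have hint : ∀ k, (∫ x, |u k x - ∑ n ∈ Finset.range M, w n (x - y n k)| ^ p ∂μ)
        - ∫ x, |u k x - ∑ n ∈ Finset.range (M + 1), w n (x - y n k)| ^ p ∂μ
      = (∫ x, |v k x| ^ p ∂μ) - ∫ x, |v k x - w M x| ^ p ∂μ := fun k => by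
    rw [hshift k M, hshift k (M + 1)]
    simp only [v, Finset.sum_range_succ, sub_self, add_zero, sub_sub]
  simp_rw [hint]
  refine tendsto_of_subseq_tendsto fun ns hns => ?_
  obtain ⟨φ, hφ, hvanish⟩ := exists_strictMono_ae_tendsto_sum_comp_add_zero (μ := μ) hp0
    (Finset.range M) (fun n _ => hw n) (z := fun n j => y M (ns j) - y n (ns j))
    fun n hn => (hy M n (Finset.mem_range.1 hn).ne').comp hns
  refine ⟨φ, tendsto_integral_abs_rpow_sub_integral_abs_rpow_sub hp0 (fun j => hv_meas _)
    (ENNReal.add_ne_top.2 ⟨hC, (ENNReal.sum_lt_top.2 fun n _ => (hw n).2).ne⟩)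
    (fun j => hv_bdd _) ?_⟩
  filter_upwards [hae M, hvanish] with x hxM hx0
  simpa using (hxM.comp (hns.comp hφ.tendsto_atTop)).sub hx0

theorem tendsto_integral_abs_rpow_sub_sum_translates (hp : 1 ≤ p)
    (hy : ∀ m n, m ≠ n → Tendsto (fun k => ‖y m k - y n k‖) atTop atTop)
    (hu : ∀ k, AEStronglyMeasurable (u k) μ) {C : ℝ≥0∞} (hC : C ≠ ∞)
    (hbdd : ∀ k, eLpNorm (u k) (ENNReal.ofReal p) μ ≤ C)
    (hae : ∀ n, ∀ᵐ x ∂μ, Tendsto (fun k => u k (x + y n k)) atTop (𝓝 (w n x))) (M : ℕ) :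
    Tendsto (fun k => (∫ x, |u k x| ^ p ∂μ) - (∑ n ∈ Finset.range M, ∫ x, |w n x| ^ p ∂μ)
        - ∫ x, |u k x - ∑ n ∈ Finset.range M, w n (x - y n k)| ^ p ∂μ) atTop (𝓝 0) := by
  have hw : ∀ n, MemLp (w n) (ENNReal.ofReal p) μ := fun n =>
    memLp_of_ae_tendsto (fun k => (hu k).comp_quasiMeasurePreserving
        (measurePreserving_add_right μ (y n k)).quasiMeasurePreserving) hC
      (fun k => (eLpNorm_comp_measurePreserving (hu k)
        (measurePreserving_add_right μ (y n k))).trans_le (hbdd k)) (hae n)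
  induction M with
  | zero => simp
  | succ M ih =>
    have h := ih.add (tendsto_sub_nhds_zero_iff.2
      (tendsto_integral_abs_rpow_sub_sum_sub_succ hp hy hu hC hbdd hw hae M))
    rw [add_zero] at h
    refine h.congr fun k => ?_
    rw [Finset.sum_range_succ]
    ring

end IteratedBrezisLieb

theorem stmt17_general (N : ℕ) (p : ℝ) (hp : 1 ≤ p)
    (y : ℕ → ℕ → EuclideanSpace ℝ (Fin N))
    (hy : ∀ m n, m ≠ n → Tendsto (fun k => ‖y m k - y n k‖) atTop atTop)
    (u : ℕ → EuclideanSpace ℝ (Fin N) → ℝ)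
    (w : ℕ → EuclideanSpace ℝ (Fin N) → ℝ)
    (hu : ∀ k, MemLp (u k) (ENNReal.ofReal p) volume)
    (hbdd : ∃ C : ℝ, ∀ k, eLpNorm (u k) (ENNReal.ofReal p) volume ≤ ENNReal.ofReal C)
    -- a.e. convergence of `u_k(· + y n k)` to `w n`:
    (hae : ∀ n, ∀ᵐ x ∂volume,
      Tendsto (fun k => u k (x + y n k)) atTop (nhds (w n x))) :
    ∀ M : ℕ,
      Tendsto (fun k =>
          (∫ x, |u k x| ^ p) - (∑ n ∈ Finset.range M, ∫ x, |w n x| ^ p) -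
            ∫ x, |u k x - ∑ n ∈ Finset.range M, w n (x - y n k)| ^ p)
        atTop (nhds 0) := by
  obtain ⟨C, hC⟩ := hbdd
  exact tendsto_integral_abs_rpow_sub_sum_translates hp hy (fun k => (hu k).1) ofReal_ne_top
    hC hae

/-- iterated Brezis–Lieb lemma.  Suppose `1 ≤ p < ∞`.  For each
`n, k ∈ ℕ` let `y n k ∈ ℝ^N`, with `|y m k - y n k| → ∞` as `k → ∞` whenever `m ≠ n`.
Let `(u_k)` be a bounded sequence in `L^p(ℝ^N)` such that for each `n` the sequence
`u_k(· + y n k)` converges weakly in `L^p` and a.e. to `w n`.  Then for every `M`,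
`∫ |u_k|^p - ∑_{n<M} ∫ |w n|^p - ∫ |u_k - ∑_{n<M} w n (· - y n k)|^p → 0`. -/
theorem stmt17 (N : ℕ) (hN : 1 ≤ N) (p : ℝ) (hp : 1 ≤ p)
    (p' : ℝ≥0∞) (hp' : 1 / ENNReal.ofReal p + 1 / p' = 1)
    (y : ℕ → ℕ → EuclideanSpace ℝ (Fin N))
    (hy : ∀ m n, m ≠ n → Tendsto (fun k => ‖y m k - y n k‖) atTop atTop)
    (u : ℕ → EuclideanSpace ℝ (Fin N) → ℝ)
    (w : ℕ → EuclideanSpace ℝ (Fin N) → ℝ)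
    (hu : ∀ k, MemLp (u k) (ENNReal.ofReal p) volume)
    (hbdd : ∃ C : ℝ, ∀ k, eLpNorm (u k) (ENNReal.ofReal p) volume ≤ ENNReal.ofReal C)
    -- weak convergence of `u_k(· + y n k)` to `w n` in `L^p(ℝ^N)`:
    (hweak : ∀ n, ∀ h : EuclideanSpace ℝ (Fin N) → ℝ, MemLp h p' volume →
      Tendsto (fun k => ∫ x, u k (x + y n k) * h x) atTop (nhds (∫ x, w n x * h x)))
    -- a.e. convergence of `u_k(· + y n k)` to `w n`:
    (hae : ∀ n, ∀ᵐ x ∂volume,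
      Tendsto (fun k => u k (x + y n k)) atTop (nhds (w n x))) :
    ∀ M : ℕ,
      Tendsto (fun k =>
          (∫ x, |u k x| ^ p) - (∑ n ∈ Finset.range M, ∫ x, |w n x| ^ p) -
            ∫ x, |u k x - ∑ n ∈ Finset.range M, w n (x - y n k)| ^ p)
        atTop (nhds 0) :=
  stmt17_general N p hp y hy u w hu hbdd hae
end
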